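/- In the contracted diameter gadget (G',w'), for every i ∈ [1,2^s]: if there exists j ∈ [1,ℓ] with x_{i,j}=y_{i,j}=1 then d_{G',w'}(a_i, b_i) ≤ 2α; and if no such j exists then d_{G',w'}(a_i, b_i) ≥ min{α+β, 3α}. -/

import Mathlib

open scoped ENNReal

set_option linter.unusedVariables false

/-- The length of a walk with respect to `ℝ≥0∞` edge weights. -/
noncomputable def wlen {V : Type*} (G : SimpleGraph V) (w : V → V → ℝ≥0∞) {u v : V}
    (p : G.Walk u v) : ℝ≥0∞ :=
  (p.darts.map fun d => w d.toProd.1 d.toProd.2).sum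

/-- The weighted distance: the infimum of walk lengths. -/
noncomputable def wdist {V : Type*} (G : SimpleGraph V) (w : V → V → ℝ≥0∞) (u v : V) : ℝ≥0∞ :=
  ⨅ p : G.Walk u v, wlen G w p

/-- Vertices of the contracted diameter gadget. -/
inductive CV (s ℓ : ℕ) where
  /-- the hub `t` -/
  | t
  /-- node `a^z_{j+1}` -/
  | ah (z : Bool) (j : Fin s)
  /-- node `a*_{j+1}` -/
  | as (j : Fin ℓ)
  /-- node `a_{i+1}` -/
  | a (i : Fin (2 ^ s))
  /-- node `b_{i+1}` -/
  | b (i : Fin (2 ^ s))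
  deriving DecidableEq, Fintype

/-- Base (oriented) adjacency of the contracted diameter gadget.  Here `bin(i,j)` is
realized as `Nat.testBit` on the 0-based index, and `bin(i,j)⊕1` as its negation. -/
def cAdj0 {s ℓ : ℕ} : CV s ℓ → CV s ℓ → Prop
  | .t, .ah _ _ => True
  | .t, .as _ => True
  | .a i, .ah z j => z = i.val.testBit j.val
  | .b i, .ah z j => z = !(i.val.testBit j.val)
  | .a i, .a i' => i ≠ i'
  | .b i, .b i' => i ≠ i'
  | .a _, .as _ => True
  | .b _, .as _ => True
  | _, _ => False

/-- The contracted diameter gadget graph. -/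
def cGadget (s ℓ : ℕ) : SimpleGraph (CV s ℓ) where
  Adj u v := u ≠ v ∧ (cAdj0 u v ∨ cAdj0 v u)
  symm := ⟨fun u v huv => ⟨huv.1.symm, huv.2.symm⟩⟩
  loopless := ⟨fun u hu => hu.1 rfl⟩

/-- The weights of the contracted diameter gadget: every edge has weight `α`,
except `a_i`–`a*_j` which has weight `α` if `x_{i,j}=1` and `β` otherwise, and
`b_i`–`a*_j` which has weight `α` if `y_{i,j}=1` and `β` otherwise. -/
def cW {s ℓ : ℕ} (x y : Fin (2 ^ s) → Fin ℓ → Bool) (α β : ℕ) : CV s ℓ → CV s ℓ → ℕ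
  | .a i, .as j => if x i j then α else β
  | .as j, .a i => if x i j then α else β
  | .b i, .as j => if y i j then α else β
  | .as j, .b i => if y i j then α else β
  | _, _ => α

/-!
Joining `a_i` to `b_i` through a common neighbour `a*_j` costs `2α` when `x_{i,j} = y_{i,j} = 1`.
Conversely, every edge weighs at least `α`, so any walk with three or more edges costs at least
`3α`. No edge joins `a_i` to `b_i`, and since they see opposite bit nodes `a^z_j`, their only
common neighbours are the `a*_j`. Without a shared `1`, one of the two edges through `a*_j`
therefore weighs `β`.
-/

open SimpleGraph

section WeightedWalk

variable {V : Type*} (G : SimpleGraph V) (w : V → V → ℝ≥0∞)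

lemma wlen_nil {u : V} : wlen G w (Walk.nil : G.Walk u u) = 0 := by
  simp [wlen]

lemma wlen_cons {u v r : V} (h : G.Adj u v) (p : G.Walk v r) :
    wlen G w (Walk.cons h p) = w u v + wlen G w p := by
  simp [wlen]

lemma wlen_pair {u v r : V} (h₁ : G.Adj u v) (h₂ : G.Adj v r) :
    wlen G w (.cons h₁ (.cons h₂ .nil)) = w u v + w v r := by
  rw [wlen_cons, wlen_cons, wlen_nil, add_zero]

lemma wdist_le_wlen {u v : V} (p : G.Walk u v) : wdist G w u v ≤ wlen G w p :=
  iInf_le _ p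

lemma length_mul_le_wlen {c : ℝ≥0∞} (hc : ∀ u v, c ≤ w u v) {u v : V} (p : G.Walk u v) :
    p.length * c ≤ wlen G w p := by
  induction p with
  | nil => simp [wlen_nil]
  | cons h p ih =>
    rw [wlen_cons, Walk.length_cons, Nat.cast_succ, add_mul, one_mul, add_comm]
    exact add_le_add (hc _ _) ih

end WeightedWalk

namespace CV

variable {s ℓ : ℕ}

lemma cGadget_adj_a_as (i : Fin (2 ^ s)) (j : Fin ℓ) : (cGadget s ℓ).Adj (a i) (as j) :=
  ⟨nofun, .inl trivial⟩

lemma cGadget_adj_as_b (j : Fin ℓ) (i : Fin (2 ^ s)) : (cGadget s ℓ).Adj (as j) (b i) :=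
  ⟨nofun, .inr trivial⟩

lemma cGadget_not_adj_a_b (i i' : Fin (2 ^ s)) : ¬ (cGadget s ℓ).Adj (a i) (b i') := by
  rintro ⟨-, h | h⟩ <;> exact h

lemma cGadget_common_neighbor_a_b {i : Fin (2 ^ s)} {v : CV s ℓ}
    (h₁ : (cGadget s ℓ).Adj (a i) v) (h₂ : (cGadget s ℓ).Adj v (b i)) : ∃ j, v = as j := by
  obtain ⟨-, h₁ | h₁⟩ := h₁ <;> obtain ⟨-, h₂ | h₂⟩ := h₂ <;>
    cases v <;> simp_all [cAdj0]

lemma le_cW {x y : Fin (2 ^ s) → Fin ℓ → Bool} {α β : ℕ} (hαβ : α ≤ β) (u v : CV s ℓ) :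
    α ≤ cW x y α β u v := by
  cases u <;> cases v <;> simp only [cW] <;> (try split_ifs) <;> omega

lemma add_le_cW_a_as_add_cW_as_b {x y : Fin (2 ^ s) → Fin ℓ → Bool} {α β : ℕ} (hαβ : α ≤ β)
    {i : Fin (2 ^ s)} {j : Fin ℓ} (hxy : ¬ (x i j = true ∧ y i j = true)) :
    α + β ≤ cW x y α β (a i) (as j) + cW x y α β (as j) (b i) := by
  cases hx : x i j <;> cases hy : y i j <;> simp_all [cW, add_comm]

end CV

open CV in
theorem stmt6_general (s ℓ : ℕ)
    (α β : ℕ) (hαβ : α ≤ β)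
    (x y : Fin (2 ^ s) → Fin ℓ → Bool) (i : Fin (2 ^ s)) :
    ((∃ j : Fin ℓ, x i j = true ∧ y i j = true) →
      wdist (cGadget s ℓ) (fun p q => ((cW x y α β p q : ℕ) : ℝ≥0∞)) (CV.a i) (CV.b i) ≤
        ((2 * α : ℕ) : ℝ≥0∞)) ∧
    ((¬ ∃ j : Fin ℓ, x i j = true ∧ y i j = true) →
      ((min (α + β) (3 * α) : ℕ) : ℝ≥0∞) ≤
        wdist (cGadget s ℓ) (fun p q => ((cW x y α β p q : ℕ) : ℝ≥0∞)) (CV.a i) (CV.b i)) := by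
  set G := cGadget s ℓ
  set w : CV s ℓ → CV s ℓ → ℝ≥0∞ := fun p q => ((cW x y α β p q : ℕ) : ℝ≥0∞)
  refine ⟨fun ⟨j, hx, hy⟩ => ?_, fun hno => le_iInf fun p => ?_⟩
  · calc wdist G w (a i) (b i) ≤ w (a i) (as j) + w (as j) (b i) :=
          (wdist_le_wlen G w _).trans_eq
            (wlen_pair G w (cGadget_adj_a_as i j) (cGadget_adj_as_b j i))
      _ = ((2 * α : ℕ) : ℝ≥0∞) := by simp [w, cW, hx, hy, two_mul]
  · match p with
    | .cons h .nil => exact absurd h (cGadget_not_adj_a_b i i)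
    | .cons h₁ (.cons h₂ .nil) =>
      obtain ⟨j, rfl⟩ := cGadget_common_neighbor_a_b h₁ h₂
      rw [wlen_pair, ← Nat.cast_add]
      exact Nat.cast_le.mpr <| (min_le_left _ _).trans
        (add_le_cW_a_as_add_cW_as_b hαβ fun hxy => hno ⟨j, hxy⟩)
    | .cons h₁ (.cons h₂ (.cons h₃ q)) =>
      have hlen := length_mul_le_wlen G w (c := α) (fun u v => Nat.cast_le.mpr (le_cW hαβ u v))
        (.cons h₁ (.cons h₂ (.cons h₃ q)))
      calc ((min (α + β) (3 * α) : ℕ) : ℝ≥0∞) ≤ 3 * α := by exact_mod_cast min_le_right _ _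
        _ ≤ (q.length + 3 : ℕ) * α := by gcongr; exact_mod_cast Nat.le_add_left 3 _
        _ ≤ _ := hlen

/-- In the contracted diameter gadget `(G',w')`, for every `i`:
if there exists `j` with `x_{i,j}=y_{i,j}=1` then `d_{G',w'}(a_i,b_i) ≤ 2α`; and if no
such `j` exists then `d_{G',w'}(a_i,b_i) ≥ min{α+β, 3α}`. -/
theorem stmt6 (s ℓ : ℕ) (hs : 1 ≤ s) (hℓ : 1 ≤ ℓ)
    (α β : ℕ) (hα : 0 < α) (hαβ : α ≤ β)
    (x y : Fin (2 ^ s) → Fin ℓ → Bool) (i : Fin (2 ^ s)) :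
    ((∃ j : Fin ℓ, x i j = true ∧ y i j = true) →
      wdist (cGadget s ℓ) (fun p q => ((cW x y α β p q : ℕ) : ℝ≥0∞)) (CV.a i) (CV.b i) ≤
        ((2 * α : ℕ) : ℝ≥0∞)) ∧
    ((¬ ∃ j : Fin ℓ, x i j = true ∧ y i j = true) →
      ((min (α + β) (3 * α) : ℕ) : ℝ≥0∞) ≤
        wdist (cGadget s ℓ) (fun p q => ((cW x y α β p q : ℕ) : ℝ≥0∞)) (CV.a i) (CV.b i)) :=
  stmt6_general s ℓ α β hαβ x y i
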